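/- With ω as above on ℂ³ (for a ∈ ℝ), and for {i,j,k} = {1,2,3}, the restriction of ω² = ω∧ω to the coordinate hyperplane ℂ³_i = {z_i = 0} equals 2(1−a²)·dx_j∧dy_j∧dx_k∧dy_k. Consequently, for a ≠ ±1 and a ≠ −1/2, the form ω restricts to a nondegenerate form on every coordinate subspace ℂ³_I, I ⊆ {1,2,3}. -/

import Mathlib

/-!
Restricting `ω` to `ℂ³_I` kills exactly the `dx_i, dy_i` with `i ∈ I`, so the restriction has
the same shape in the remaining coordinates. Its powers are computed by expanding in the
exterior algebra, using only that 1-forms anticommute: on two coordinates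
`ω² = 2(1 - a²) dx_j dy_j dx_k dy_k`, and on all three `ω³ = 6(a - 1)²(2a + 1) · vol`.
These volume forms are nonzero since they pair with the real basis `e_1, i e_1, e_2, …` of `ℂ³`
to a determinant of an identity matrix.
-/
set_option synthInstance.maxHeartbeats 1000000
set_option maxHeartbeats 1000000

open ExteriorAlgebra

/-- The real-linear functional `dx_i = Re ∘ z_i` on `ℂ^n`. -/
noncomputable def dxF (n : ℕ) (i : Fin n) : Module.Dual ℝ (Fin n → ℂ) :=
  Complex.reLm.comp ((LinearMap.proj i : (Fin n → ℂ) →ₗ[ℂ] ℂ).restrictScalars ℝ)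

/-- The real-linear functional `dy_i = Im ∘ z_i` on `ℂ^n`. -/
noncomputable def dyF (n : ℕ) (i : Fin n) : Module.Dual ℝ (Fin n → ℂ) :=
  Complex.imLm.comp ((LinearMap.proj i : (Fin n → ℂ) →ₗ[ℂ] ℂ).restrictScalars ℝ)

/-- `dx_i` as a degree-1 element of the exterior algebra of the dual of `ℂ^n`. -/
noncomputable def dxE (n : ℕ) (i : Fin n) :
    ExteriorAlgebra ℝ (Module.Dual ℝ (Fin n → ℂ)) :=
  ExteriorAlgebra.ι ℝ (dxF n i)

/-- `dy_i` as a degree-1 element of the exterior algebra of the dual of `ℂ^n`. -/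
noncomputable def dyE (n : ℕ) (i : Fin n) :
    ExteriorAlgebra ℝ (Module.Dual ℝ (Fin n → ℂ)) :=
  ExteriorAlgebra.ι ℝ (dyF n i)

/-- The coordinate area form `dx_i ∧ dy_i`. -/
noncomputable def dxyE (n : ℕ) (i : Fin n) :
    ExteriorAlgebra ℝ (Module.Dual ℝ (Fin n → ℂ)) :=
  dxE n i * dyE n i

/-- The complex volume form of the coordinate subspace `ℂ^n_I`: the wedge of
`dx_i ∧ dy_i` over `i ∉ I` (in increasing order). -/
noncomputable def volForm (n : ℕ) (I : Finset (Fin n)) :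
    ExteriorAlgebra ℝ (Module.Dual ℝ (Fin n → ℂ)) :=
  (((Iᶜ).sort (· ≤ ·)).map fun i => dxyE n i).prod

/-- The projection of `ℂ^n` onto the coordinate subspace `ℂ^n_I` (setting the
coordinates in `I` to zero). -/
noncomputable def coordProj (n : ℕ) (I : Finset (Fin n)) :
    (Fin n → ℂ) →ₗ[ℝ] (Fin n → ℂ) where
  toFun z := fun i => if i ∈ I then 0 else z i
  map_add' := by intro a b; funext i; by_cases h : i ∈ I <;> simp [h]
  map_smul' := by intro c a; funext i; by_cases h : i ∈ I <;> simp [h]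

/-- Pullback of exterior forms on `ℂ^n` along the projection onto `ℂ^n_I`; this computes
the restriction of a form to the coordinate subspace `ℂ^n_I`. -/
noncomputable def pullbackI (n : ℕ) (I : Finset (Fin n)) :
    ExteriorAlgebra ℝ (Module.Dual ℝ (Fin n → ℂ)) →ₐ[ℝ]
      ExteriorAlgebra ℝ (Module.Dual ℝ (Fin n → ℂ)) :=
  ExteriorAlgebra.map ((coordProj n I).dualMap)

/-- The subspace of genuine (grade-2) alternating 2-forms inside the exterior algebra. -/
noncomputable def grade2 (n : ℕ) :
    Submodule ℝ (ExteriorAlgebra ℝ (Module.Dual ℝ (Fin n → ℂ))) :=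
  LinearMap.range (ExteriorAlgebra.ι ℝ (M := Module.Dual ℝ (Fin n → ℂ))) ^ 2

/-- The 2-form of Example 2.7 of the paper, on `ℂ³ ≅ ℝ⁶`. -/
noncomputable def omegaA (a : ℝ) : ExteriorAlgebra ℝ (Module.Dual ℝ (Fin 3 → ℂ)) :=
  (∑ i : Fin 3, dxyE 3 i)
    + a • (dxE 3 0 * dyE 3 1 - dyE 3 0 * dxE 3 1)
    + a • (dxE 3 0 * dyE 3 2 - dyE 3 0 * dxE 3 2)
    + a • (dxE 3 1 * dyE 3 2 - dyE 3 1 * dxE 3 2)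

namespace ExteriorAlgebra

variable {R M : Type*} [CommRing R] [AddCommGroup M] [Module R M]

theorem ι_mul_ι_swap (u v : M) : ι R v * ι R u = -(ι R u * ι R v) :=
  eq_neg_of_add_eq_zero_left (ι_add_mul_swap v u)

theorem ι_mul_ι_mul_swap (u v : M) (c : ExteriorAlgebra R M) :
    ι R v * (ι R u * c) = -(ι R u * (ι R v * c)) := by
  rw [← mul_assoc, ι_mul_ι_swap, neg_mul, mul_assoc]

theorem ι_mul_ι_mul_self (u : M) (c : ExteriorAlgebra R M) : ι R u * (ι R u * c) = 0 := by
  rw [← mul_assoc, ι_sq_zero, zero_mul]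

theorem commute_ι_mul_ι_ι (u v w : M) : Commute (ι R u * ι R v) (ι R w) := by
  rw [Commute, SemiconjBy, mul_assoc, ι_mul_ι_swap w v, mul_neg, ← mul_assoc, ι_mul_ι_swap w u,
    neg_mul, neg_neg, mul_assoc]

theorem commute_ι_mul_ι (u v w t : M) : Commute (ι R u * ι R v) (ι R w * ι R t) :=
  (commute_ι_mul_ι_ι u v w).mul_right (commute_ι_mul_ι_ι u v t)

/- In the two expansions below, the hypothesis `i < j` of the anticommutation rules only orients
them, so that `simp` sorts every monomial into increasing order of the indices. -/

theorem sq_coupledAreaForm (a : R) (v : Fin 4 → M) :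
    (ι R (v 0) * ι R (v 1) + ι R (v 2) * ι R (v 3)
      + a • (ι R (v 0) * ι R (v 3) - ι R (v 1) * ι R (v 2))) ^ 2
      = (2 * (1 - a ^ 2)) • ιMulti R 4 v := by
  simp (disch := decide) only [ιMulti_apply, List.ofFn_succ, Fin.reduceSucc, List.ofFn_zero,
    List.prod_cons, List.prod_nil, mul_one, pow_two, mul_add, add_mul, mul_sub, sub_mul,
    smul_mul_assoc, mul_smul_comm, mul_neg, mul_assoc, ι_sq_zero, ι_mul_ι_mul_self,
    fun (i j : Fin 4) (_ : i < j) => ι_mul_ι_swap (R := R) (v i) (v j),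
    fun (i j : Fin 4) (_ : i < j) => ι_mul_ι_mul_swap (R := R) (v i) (v j)]
  module

theorem pow_three_coupledAreaForm (a : R) (v : Fin 6 → M) :
    (ι R (v 0) * ι R (v 1) + ι R (v 2) * ι R (v 3) + ι R (v 4) * ι R (v 5)
      + a • (ι R (v 0) * ι R (v 3) - ι R (v 1) * ι R (v 2))
      + a • (ι R (v 0) * ι R (v 5) - ι R (v 1) * ι R (v 4))
      + a • (ι R (v 2) * ι R (v 5) - ι R (v 3) * ι R (v 4))) ^ 3
      = (6 * (a - 1) ^ 2 * (2 * a + 1)) • ιMulti R 6 v := by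
  simp (disch := decide) only [ιMulti_apply, List.ofFn_succ, Fin.reduceSucc, List.ofFn_zero,
    List.prod_cons, List.prod_nil, mul_one, pow_succ, pow_zero, one_mul, mul_add, add_mul, mul_sub,
    sub_mul, smul_mul_assoc, mul_smul_comm, smul_smul, smul_add, smul_sub, smul_neg, mul_neg,
    neg_mul, neg_neg, mul_assoc, ι_sq_zero, ι_mul_ι_mul_self, mul_zero, add_zero, zero_add,
    smul_zero, neg_zero, sub_zero, zero_sub,
    fun (i j : Fin 6) (_ : i < j) => ι_mul_ι_swap (R := R) (v i) (v j),
    fun (i j : Fin 6) (_ : i < j) => ι_mul_ι_mul_swap (R := R) (v i) (v j)]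
  module

theorem ιMulti_ne_zero_of_det_ne_zero {N : Type*} [AddCommGroup N] [Module R N] {n : ℕ}
    (f : Fin n → Module.Dual R N) (c : Fin n → N)
    (h : (Matrix.of fun i j ↦ f j (c i)).det ≠ 0) : ιMulti R n f ≠ 0 := by
  intro hf
  have hf' : exteriorPower.ιMulti R n f = 0 := Subtype.ext hf
  rw [← exteriorPower.pairingDual_ιMulti_ιMulti, hf', map_zero, LinearMap.zero_apply] at h
  exact h rfl

end ExteriorAlgebra

theorem dualMap_coordProj_dxF (n : ℕ) (I : Finset (Fin n)) (i : Fin n) :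
    (coordProj n I).dualMap (dxF n i) = if i ∈ I then 0 else dxF n i := by
  ext z
  by_cases h : i ∈ I <;> simp [coordProj, dxF, h]

theorem dualMap_coordProj_dyF (n : ℕ) (I : Finset (Fin n)) (i : Fin n) :
    (coordProj n I).dualMap (dyF n i) = if i ∈ I then 0 else dyF n i := by
  ext z
  by_cases h : i ∈ I <;> simp [coordProj, dyF, h]

@[simp]
theorem pullbackI_dxE (n : ℕ) (I : Finset (Fin n)) (i : Fin n) :
    pullbackI n I (dxE n i) = if i ∈ I then 0 else dxE n i := by
  rw [pullbackI, dxE, map_apply_ι, dualMap_coordProj_dxF, apply_ite (ι ℝ), map_zero]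

@[simp]
theorem pullbackI_dyE (n : ℕ) (I : Finset (Fin n)) (i : Fin n) :
    pullbackI n I (dyE n i) = if i ∈ I then 0 else dyE n i := by
  rw [pullbackI, dyE, map_apply_ι, dualMap_coordProj_dyF, apply_ite (ι ℝ), map_zero]

theorem pullbackI_empty (n : ℕ) : pullbackI n ∅ = AlgHom.id ℝ _ := by
  have : coordProj n ∅ = LinearMap.id := LinearMap.ext fun z ↦ funext fun i ↦ by simp [coordProj]
  rw [pullbackI, this, LinearMap.dualMap_id, map_id]

theorem commute_dxyE (n : ℕ) (j k : Fin n) : Commute (dxyE n j) (dxyE n k) :=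
  commute_ι_mul_ι _ _ _ _

theorem pullbackI_singleton_omegaA (a : ℝ) {i j k : Fin 3} (hij : i ≠ j) (hik : i ≠ k)
    (hjk : j < k) : pullbackI 3 {i} (omegaA a)
      = dxE 3 j * dyE 3 j + dxE 3 k * dyE 3 k + a • (dxE 3 j * dyE 3 k - dyE 3 j * dxE 3 k) := by
  fin_cases i <;> fin_cases j <;> fin_cases k <;>
    simp [omegaA, dxyE, Fin.sum_univ_three] at hij hik hjk ⊢

theorem pullbackI_compl_singleton_omegaA (a : ℝ) (k : Fin 3) :
    pullbackI 3 {k}ᶜ (omegaA a) = dxyE 3 k := by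
  fin_cases k <;> simp [omegaA, dxyE, Fin.sum_univ_three]

theorem dxyE_mul_dxyE_eq_ιMulti (n : ℕ) (j k : Fin n) :
    dxyE n j * dxyE n k = ιMulti ℝ 4 ![dxF n j, dyF n j, dxF n k, dyF n k] := by
  simp [ιMulti_apply, dxyE, dxE, dyE, mul_assoc]

theorem dxyE_mul_dxyE_mul_dxyE_eq_ιMulti :
    dxyE 3 0 * dxyE 3 1 * dxyE 3 2
      = ιMulti ℝ 6 ![dxF 3 0, dyF 3 0, dxF 3 1, dyF 3 1, dxF 3 2, dyF 3 2] := by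
  simp [ιMulti_apply, dxyE, dxE, dyE, mul_assoc]

theorem pullbackI_singleton_omegaA_sq (a : ℝ) {i j k : Fin 3} (hij : i ≠ j) (hik : i ≠ k)
    (hjk : j ≠ k) : pullbackI 3 {i} (omegaA a ^ 2) = (2 * (1 - a ^ 2)) • (dxyE 3 j * dxyE 3 k) := by
  wlog hlt : j < k generalizing j k
  · rw [(commute_dxyE 3 j k).eq]
    exact this hik hij hjk.symm (hjk.symm.lt_of_le (not_lt.1 hlt))
  rw [map_pow, pullbackI_singleton_omegaA a hij hik hlt, dxyE_mul_dxyE_eq_ιMulti]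
  exact sq_coupledAreaForm a ![dxF 3 j, dyF 3 j, dxF 3 k, dyF 3 k]

theorem omegaA_pow_three (a : ℝ) :
    omegaA a ^ 3 = (6 * (a - 1) ^ 2 * (2 * a + 1)) • (dxyE 3 0 * dxyE 3 1 * dxyE 3 2) := by
  rw [dxyE_mul_dxyE_mul_dxyE_eq_ιMulti, ← pow_three_coupledAreaForm]
  simp [omegaA, dxyE, dxE, dyE, Fin.sum_univ_three]

theorem dxyE_mul_dxyE_mul_dxyE_ne_zero : dxyE 3 0 * dxyE 3 1 * dxyE 3 2 ≠ 0 := by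
  rw [dxyE_mul_dxyE_mul_dxyE_eq_ιMulti]
  refine ιMulti_ne_zero_of_det_ne_zero _ ![Pi.single 0 1, Pi.single 0 Complex.I,
    Pi.single 1 1, Pi.single 1 Complex.I, Pi.single 2 1, Pi.single 2 Complex.I] ?_
  have hid : Matrix.of (fun p q ↦ ![dxF 3 0, dyF 3 0, dxF 3 1, dyF 3 1, dxF 3 2, dyF 3 2] q
      (![Pi.single 0 1, Pi.single 0 Complex.I, Pi.single 1 1, Pi.single 1 Complex.I,
        Pi.single 2 1, Pi.single 2 Complex.I] p)) = 1 := by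
    ext p q
    fin_cases p <;> fin_cases q <;> simp [dxF, dyF]
  rw [hid, Matrix.det_one]
  exact one_ne_zero

theorem dxyE_mul_dxyE_ne_zero {j k : Fin 3} (hjk : j ≠ k) : dxyE 3 j * dxyE 3 k ≠ 0 := by
  wlog hlt : j < k generalizing j k
  · rw [(commute_dxyE 3 j k).eq]
    exact this hjk.symm (hjk.symm.lt_of_le (not_lt.1 hlt))
  have hvol := dxyE_mul_dxyE_mul_dxyE_ne_zero
  fin_cases j <;> fin_cases k <;> simp at hlt
  · exact left_ne_zero_of_mul hvol
  · exact left_ne_zero_of_mul (((commute_dxyE 3 1 2).right_comm _) ▸ hvol)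
  · rw [mul_assoc] at hvol
    exact right_ne_zero_of_mul hvol

theorem dxyE_ne_zero (k : Fin 3) : dxyE 3 k ≠ 0 :=
  have ⟨_, hjk⟩ := exists_ne k
  right_ne_zero_of_mul (dxyE_mul_dxyE_ne_zero hjk)

theorem pullbackI_omegaA_pow_ne_zero {a : ℝ} (ha₁ : a ≠ 1) (ha₂ : a ≠ -1) (ha₃ : a ≠ -(1 / 2))
    (I : Finset (Fin 3)) : pullbackI 3 I (omegaA a) ^ (3 - I.card) ≠ 0 := by
  have hcard : I.card ≤ 3 := by simpa using I.card_le_univ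
  interval_cases h : I.card
  · have hc : 6 * (a - 1) ^ 2 * (2 * a + 1) ≠ 0 := by
      have : 2 * a + 1 ≠ 0 := fun h ↦ ha₃ (by linarith)
      have : a - 1 ≠ 0 := sub_ne_zero.2 ha₁
      positivity
    rw [Finset.card_eq_zero.1 h, pullbackI_empty, AlgHom.id_apply, omegaA_pow_three]
    exact smul_ne_zero hc dxyE_mul_dxyE_mul_dxyE_ne_zero
  · have hc : 2 * (1 - a ^ 2) ≠ 0 := by
      have : (1 - a) * (1 + a) ≠ 0 :=
        mul_ne_zero (sub_ne_zero.2 ha₁.symm) fun h ↦ ha₂ (by linarith)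
      contrapose! this
      linear_combination this / 2
    obtain ⟨i, rfl⟩ := Finset.card_eq_one.1 h
    obtain ⟨j, k, hjk, hcompl⟩ : ∃ j k, j ≠ k ∧ {i}ᶜ = ({j, k} : Finset (Fin 3)) :=
      Finset.card_eq_two.1 (by rw [Finset.card_compl, h]; rfl)
    have hj : j ∈ ({i}ᶜ : Finset (Fin 3)) := by simp [hcompl]
    have hk : k ∈ ({i}ᶜ : Finset (Fin 3)) := by simp [hcompl]
    rw [Finset.mem_compl, Finset.mem_singleton] at hj hk
    rw [← map_pow, pullbackI_singleton_omegaA_sq a (Ne.symm hj) (Ne.symm hk) hjk]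
    exact smul_ne_zero hc (dxyE_mul_dxyE_ne_zero hjk)
  · obtain ⟨k, hk⟩ := Finset.card_eq_one.1 (by rw [Finset.card_compl, h]; rfl : Iᶜ.card = 1)
    rw [← compl_compl I, hk, pullbackI_compl_singleton_omegaA, pow_one]
    exact dxyE_ne_zero k
  · rw [pow_zero]
    exact one_ne_zero

/-- the restriction of `ω² = ω∧ω` to the coordinate hyperplane `ℂ³_i`
equals `2(1−a²)·dx_j∧dy_j∧dx_k∧dy_k` for `{i,j,k} = {1,2,3}`; consequently, for
`a ≠ ±1, −1/2` the form `ω` restricts to a nondegenerate form (nonzero top power)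
on every coordinate subspace `ℂ³_I`. -/
theorem stmt7 (a : ℝ) :
    (∀ i j k : Fin 3, i ≠ j → i ≠ k → j ≠ k →
      pullbackI 3 {i} ((omegaA a) ^ 2) = (2 * (1 - a ^ 2)) • (dxyE 3 j * dxyE 3 k)) ∧
    (a ≠ 1 → a ≠ -1 → a ≠ -(1 / 2) →
      ∀ I : Finset (Fin 3), pullbackI 3 I (omegaA a) ^ (3 - I.card) ≠ 0) :=
  ⟨fun _ _ _ ↦ pullbackI_singleton_omegaA_sq a,
    fun ha₁ ha₂ ha₃ ↦ pullbackI_omegaA_pow_ne_zero ha₁ ha₂ ha₃⟩
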